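/- arXiv:1811.03933 — 2 statements merged into one kernel-verified Lean document; each statement's English description precedes it below -/
import Mathlib

section
/- In the variational CEO cost, the parameter s1 can be restricted to (0,1]: if s1 > 1, then for every choice of encoders P, F_s(P) = H(X|U1,U2,Y0) + s1 I(Y1;U1|U2,Y0) + s2 I(Y2;U2|Y0) ≥ H(X|U2,Y0) + s2 I(Y2;U2|Y0), and the latter value is attained by taking U1 constant; hence min_P F_s(P) = H(X|U2,Y0) + s2 I(Y2;U2|Y0) whenever s1 > 1. -/
open scoped BigOperators

noncomputable section

namespace CEO

variable {X Y0 Y1 Y2 U1 U2 : Type*}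
  [Fintype X] [Fintype Y0] [Fintype Y1] [Fintype Y2] [Fintype U1] [Fintype U2]

/-- Joint pmf of `(X, Y0, Y1, Y2, U1, U2)` induced by the source pmf `p` on
`(X, Y0, Y1, Y2)` and the stochastic encoders `P1 : Y1 → U1`, `P2 : Y2 → U2`
(this encodes the Markov chain `U1 – Y1 – (X,Y0) – Y2 – U2`). -/
def joint (p : X → Y0 → Y1 → Y2 → ℝ) (P1 : Y1 → U1 → ℝ) (P2 : Y2 → U2 → ℝ)
    (x : X) (y0 : Y0) (y1 : Y1) (y2 : Y2) (u1 : U1) (u2 : U2) : ℝ :=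
  p x y0 y1 y2 * P1 y1 u1 * P2 y2 u2

variable (p : X → Y0 → Y1 → Y2 → ℝ) (P1 : Y1 → U1 → ℝ) (P2 : Y2 → U2 → ℝ)

def mXU12Y0 (x : X) (u1 : U1) (u2 : U2) (y0 : Y0) : ℝ :=
  ∑ y1, ∑ y2, joint p P1 P2 x y0 y1 y2 u1 u2

def mU12Y0 (u1 : U1) (u2 : U2) (y0 : Y0) : ℝ := ∑ x, mXU12Y0 p P1 P2 x u1 u2 y0

def mY1U1U2Y0 (y1 : Y1) (u1 : U1) (u2 : U2) (y0 : Y0) : ℝ :=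
  ∑ x, ∑ y2, joint p P1 P2 x y0 y1 y2 u1 u2

def mY1U2Y0 (y1 : Y1) (u2 : U2) (y0 : Y0) : ℝ :=
  ∑ x, ∑ y2, ∑ u1, joint p P1 P2 x y0 y1 y2 u1 u2

def mY2U2Y0 (y2 : Y2) (u2 : U2) (y0 : Y0) : ℝ :=
  ∑ x, ∑ y1, ∑ u1, joint p P1 P2 x y0 y1 y2 u1 u2

def mY2Y0 (y2 : Y2) (y0 : Y0) : ℝ := ∑ x, ∑ y1, p x y0 y1 y2

def mY0 (y0 : Y0) : ℝ := ∑ x, ∑ y1, ∑ y2, p x y0 y1 y2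

def mXY0 (x : X) (y0 : Y0) : ℝ := ∑ y1, ∑ y2, p x y0 y1 y2

def mXU1Y0 (x : X) (u1 : U1) (y0 : Y0) : ℝ :=
  ∑ y1, ∑ y2, ∑ u2, joint p P1 P2 x y0 y1 y2 u1 u2

def mU1Y0 (u1 : U1) (y0 : Y0) : ℝ := ∑ x, mXU1Y0 p P1 P2 x u1 y0

def mXU2Y0 (x : X) (u2 : U2) (y0 : Y0) : ℝ :=
  ∑ y1, ∑ y2, ∑ u1, joint p P1 P2 x y0 y1 y2 u1 u2

def mU2Y0 (u2 : U2) (y0 : Y0) : ℝ := ∑ x, mXU2Y0 p P1 P2 x u2 y0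

def mU1 (u1 : U1) : ℝ := ∑ y0, mU1Y0 p P1 P2 u1 y0

def mU2 (u2 : U2) : ℝ := ∑ y0, mU2Y0 p P1 P2 u2 y0

def mY1 (y1 : Y1) : ℝ := ∑ x, ∑ y0, ∑ y2, p x y0 y1 y2

def mY2 (y2 : Y2) : ℝ := ∑ x, ∑ y0, ∑ y1, p x y0 y1 y2

def mY1U1 (y1 : Y1) (u1 : U1) : ℝ := mY1 p y1 * P1 y1 u1

def mY2U2 (y2 : Y2) (u2 : U2) : ℝ := mY2 p y2 * P2 y2 u2

/-- `H(X | U1, U2, Y0)`. -/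
def HXgU12Y0 : ℝ :=
  -∑ x, ∑ u1, ∑ u2, ∑ y0, mXU12Y0 p P1 P2 x u1 u2 y0 *
    Real.log (mXU12Y0 p P1 P2 x u1 u2 y0 / mU12Y0 p P1 P2 u1 u2 y0)

/-- `I(Y1; U1 | U2, Y0)`. -/
def I1 : ℝ :=
  ∑ y1, ∑ u1, ∑ u2, ∑ y0, mY1U1U2Y0 p P1 P2 y1 u1 u2 y0 *
    Real.log (mY1U1U2Y0 p P1 P2 y1 u1 u2 y0 * mU2Y0 p P1 P2 u2 y0 /
      (mY1U2Y0 p P1 P2 y1 u2 y0 * mU12Y0 p P1 P2 u1 u2 y0))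

/-- `I(Y2; U2 | Y0)`. -/
def I2 : ℝ :=
  ∑ y2, ∑ u2, ∑ y0, mY2U2Y0 p P1 P2 y2 u2 y0 *
    Real.log (mY2U2Y0 p P1 P2 y2 u2 y0 * mY0 p y0 /
      (mY2Y0 p y2 y0 * mU2Y0 p P1 P2 u2 y0))

/-- The CEO Lagrangian `F_s(P) = H(X|U1,U2,Y0) + s1 I(Y1;U1|U2,Y0) + s2 I(Y2;U2|Y0)`. -/
def Fs (s1 s2 : ℝ) : ℝ :=
  HXgU12Y0 p P1 P2 + s1 * I1 p P1 P2 + s2 * I2 p P1 P2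

end CEO

namespace CEO

variable {X Y0 Y1 Y2 U1 U2 : Type*}
  [Fintype X] [Fintype Y0] [Fintype Y1] [Fintype Y2] [Fintype U1] [Fintype U2]
variable (p : X → Y0 → Y1 → Y2 → ℝ) (P2 : Y2 → U2 → ℝ)

/-- Marginal `P_{X,U2,Y0}` (depending only on the source and the second encoder). -/
def mXU2Y0' (x : X) (u2 : U2) (y0 : Y0) : ℝ := ∑ y1, ∑ y2, p x y0 y1 y2 * P2 y2 u2

def mU2Y0' (u2 : U2) (y0 : Y0) : ℝ := ∑ x, mXU2Y0' p P2 x u2 y0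

def mY2U2Y0' (y2 : Y2) (u2 : U2) (y0 : Y0) : ℝ := (∑ x, ∑ y1, p x y0 y1 y2) * P2 y2 u2

/-- `H(X | U2, Y0)`, depending only on `p` and `P2`. -/
def HXgU2Y0' : ℝ :=
  -∑ x, ∑ u2, ∑ y0, mXU2Y0' p P2 x u2 y0 *
    Real.log (mXU2Y0' p P2 x u2 y0 / mU2Y0' p P2 u2 y0)

/-- `I(Y2; U2 | Y0)`, depending only on `p` and `P2`. -/
def I2' : ℝ :=
  ∑ y2, ∑ u2, ∑ y0, mY2U2Y0' p P2 y2 u2 y0 *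
    Real.log (mY2U2Y0' p P2 y2 u2 y0 * mY0 p y0 /
      (mY2Y0 p y2 y0 * mU2Y0' p P2 u2 y0))

/-!
Conditioning everything on `D = (U2, Y0)`, the source `X`, the observation `Y1` and the
description `U1` form a Markov chain `X – Y1 – U1`, so `H(U1 | X, Y1, D) = H(U1 | Y1, D)`.
Expanding into joint entropies this gives the chain rule
`H(X|D) + I(Y1;U1|X,D) = H(X|U1,D) + I(Y1;U1|D)`. Both conditional mutual informations are
nonnegative (Gibbs' inequality), so for `s1 ≥ 1`
`H(X|U1,D) + s1 I(Y1;U1|D) ≥ H(X|U1,D) + I(Y1;U1|D) ≥ H(X|D)`, while `I(Y2;U2|Y0)` does not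
depend on the first encoder. For a constant `U1` both mutual informations vanish.
-/

open Finset Real

lemma sub_le_mul_log_div {a b : ℝ} (ha : 0 ≤ a) (hb : 0 ≤ b) (hab : 0 < a → 0 < b) :
    a - b ≤ a * log (a / b) := by
  rcases ha.eq_or_lt with rfl | ha
  · simpa using hb
  · have h := mul_le_mul_of_nonneg_left (one_sub_inv_le_log_of_pos (div_pos ha (hab ha))) ha.le
    rwa [inv_div, mul_sub, mul_one, mul_div_cancel₀ _ ha.ne'] at h

section InformationMeasures

variable {A B C : Type*} [Fintype A] [Fintype B] [Fintype C]

def condEntropy (w : A → B → ℝ) : ℝ :=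
  -∑ a, ∑ b, w a b * log (w a b / ∑ a', w a' b)

def condMutualInfo (w : A → B → C → ℝ) : ℝ :=
  ∑ a, ∑ b, ∑ c, w a b c *
    log (w a b c * (∑ a', ∑ b', w a' b' c) / ((∑ b', w a b' c) * ∑ a', w a' b c))

theorem condMutualInfo_nonneg {w : A → B → C → ℝ} (hw : ∀ a b c, 0 ≤ w a b c) :
    0 ≤ condMutualInfo w := by
  set wC := fun c => ∑ a', ∑ b', w a' b' c
  set wAC := fun a c => ∑ b', w a b' c
  set wBC := fun b c => ∑ a', w a' b c
  have hwAC : ∀ a b c, w a b c ≤ wAC a c := fun a b c =>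
    single_le_sum (fun b' _ => hw a b' c) (mem_univ b)
  have hwBC : ∀ a b c, w a b c ≤ wBC b c := fun a b c =>
    single_le_sum (fun a' _ => hw a' b c) (mem_univ a)
  have hwC : ∀ a c, wAC a c ≤ wC c := fun a c =>
    single_le_sum (f := fun a' => wAC a' c) (fun a' _ => sum_nonneg fun b' _ => hw a' b' c)
      (mem_univ a)
  have gibbs : ∀ a b c, w a b c - wAC a c * wBC b c / wC c ≤
      w a b c * log (w a b c * wC c / (wAC a c * wBC b c)) := fun a b c => by
    rw [← div_div_eq_mul_div (w a b c)]
    have h0 := hw a b c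
    refine sub_le_mul_log_div h0 (div_nonneg (mul_nonneg (h0.trans (hwAC a b c))
      (h0.trans (hwBC a b c))) (h0.trans ((hwAC a b c).trans (hwC a c)))) fun hpos => ?_
    have h1 := hpos.trans_le (hwAC a b c)
    exact div_pos (mul_pos h1 (hpos.trans_le (hwBC a b c))) (h1.trans_le (hwC a c))
  have mass : ∀ c, ∑ a, ∑ b, wAC a c * wBC b c / wC c ≤ ∑ a, ∑ b, w a b c := fun c => by
    have hsum : ∑ a, ∑ b, wAC a c * wBC b c / wC c = wC c * wC c / wC c := by
      simp only [← sum_div, ← sum_mul_sum]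
      congr 2
      exact sum_comm
    rw [hsum]
    rcases eq_or_ne (wC c) 0 with h | h
    · simp [h, wC]
    · rw [mul_div_cancel_right₀ _ h]
  calc (0 : ℝ) ≤ ∑ c, (∑ a, ∑ b, w a b c - ∑ a, ∑ b, wAC a c * wBC b c / wC c) :=
        sum_nonneg fun c _ => sub_nonneg.2 (mass c)
    _ = ∑ a, ∑ b, ∑ c, (w a b c - wAC a c * wBC b c / wC c) := by
        simp only [← sum_sub_distrib]
        exact sum_comm_cycle.symm
    _ ≤ condMutualInfo w :=
        sum_le_sum fun a _ => sum_le_sum fun b _ => sum_le_sum fun c _ => gibbs a b c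

theorem condMutualInfo_eq_zero_of_eq_mul {w : A → B → C → ℝ} (f : A → C → ℝ) (g : B → C → ℝ)
    (hw : ∀ a b c, w a b c = f a c * g b c) : condMutualInfo w = 0 := by
  refine sum_eq_zero fun a _ => sum_eq_zero fun b _ => sum_eq_zero fun c _ => ?_
  simp only [hw, ← mul_sum, ← sum_mul]
  rw [show f a c * (∑ b', g b' c) * ((∑ a', f a' c) * g b c)
      = f a c * g b c * ((∑ a', f a' c) * ∑ b', g b' c) by ring]
  rcases eq_or_ne (f a c * g b c * ((∑ a', f a' c) * ∑ b', g b' c)) 0 with h | h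
  · rw [h, zero_div, log_zero, mul_zero]
  · rw [div_self h, log_one, mul_zero]

theorem condEntropy_eq_sum_negMulLog {w : A → B → ℝ} (hw : ∀ a b, 0 ≤ w a b) :
    condEntropy w = ∑ a, ∑ b, negMulLog (w a b) - ∑ b, negMulLog (∑ a, w a b) := by
  have hlog : ∀ a b, w a b * log (w a b / ∑ a', w a' b) =
      w a b * log (w a b) - w a b * log (∑ a', w a' b) := fun a b => by
    rcases (hw a b).eq_or_lt with h | h
    · simp [← h]
    · rw [log_div h.ne' (h.trans_le (single_le_sum (fun a' _ => hw a' b) (mem_univ a))).ne',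
        mul_sub]
  simp only [condEntropy, hlog, sum_sub_distrib, negMulLog, neg_mul, sum_neg_distrib]
  rw [sum_comm (γ := A) (f := fun a b => w a b * log (∑ a', w a' b))]
  simp only [← sum_mul]
  ring

theorem condMutualInfo_eq_sum_negMulLog {w : A → B → C → ℝ} (hw : ∀ a b c, 0 ≤ w a b c) :
    condMutualInfo w = ∑ a, ∑ c, negMulLog (∑ b, w a b c) + ∑ b, ∑ c, negMulLog (∑ a, w a b c)
      - ∑ a, ∑ b, ∑ c, negMulLog (w a b c) - ∑ c, negMulLog (∑ a, ∑ b, w a b c) := by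
  have hlog : ∀ a b c, w a b c * log (w a b c * (∑ a', ∑ b', w a' b' c) /
      ((∑ b', w a b' c) * ∑ a', w a' b c)) = w a b c * log (w a b c)
        + w a b c * log (∑ a', ∑ b', w a' b' c) - w a b c * log (∑ b', w a b' c)
        - w a b c * log (∑ a', w a' b c) := fun a b c => by
    rcases (hw a b c).eq_or_lt with h | h
    · simp [← h]
    · have hAC := h.trans_le (single_le_sum (fun b' _ => hw a b' c) (mem_univ b))
      have hBC := h.trans_le (single_le_sum (fun a' _ => hw a' b c) (mem_univ a))
      have hC := hAC.trans_le (single_le_sum (f := fun a' => ∑ b', w a' b' c)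
        (fun a' _ => sum_nonneg fun b' _ => hw a' b' c) (mem_univ a))
      rw [log_div (mul_pos h hC).ne' (mul_pos hAC hBC).ne', log_mul h.ne' hC.ne',
        log_mul hAC.ne' hBC.ne']
      ring
  simp only [condMutualInfo, hlog]
  simp only [sum_sub_distrib, sum_add_distrib, negMulLog, neg_mul, sum_neg_distrib, sum_mul]
  simp only [sum_comm (γ := C) (α := A), sum_comm (γ := C) (α := B), sum_comm (γ := B) (α := A)]
  ring

theorem sum_negMulLog_mul_of_sum_eq_one {ι : Type*} [Fintype ι] {K : ι → ℝ} (hK : ∑ i, K i = 1)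
    (a : ℝ) : ∑ i, negMulLog (a * K i) = negMulLog a + a * ∑ i, negMulLog (K i) := by
  simp only [negMulLog_mul, sum_add_distrib, ← sum_mul, ← mul_sum, hK, one_mul]

end InformationMeasures

section Markov

variable {A B C D : Type*} [Fintype A] [Fintype B] [Fintype C] [Fintype D]

theorem condEntropy_add_condMutualInfo_of_markov {r : A → B → D → ℝ} {K : B → C → ℝ}
    (hr : ∀ a b d, 0 ≤ r a b d) (hK : ∀ b c, 0 ≤ K b c) (hK1 : ∀ b, ∑ c, K b c = 1) :
    condEntropy (fun a d => ∑ b, r a b d) +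
        condMutualInfo (fun b c (ad : A × D) => r ad.1 b ad.2 * K b c) =
      condEntropy (fun a (cd : C × D) => ∑ b, r a b cd.2 * K b cd.1) +
        condMutualInfo (fun b c d => ∑ a, r a b d * K b c) := by
  have hrK : ∀ a b d, ∑ c, r a b d * K b c = r a b d := fun a b d => by
    rw [← mul_sum, hK1, mul_one]
  have hq : ∀ a b c d, 0 ≤ r a b d * K b c := fun a b c d => mul_nonneg (hr a b d) (hK b c)
  rw [condEntropy_eq_sum_negMulLog fun a d => sum_nonneg fun b _ => hr a b d,
    condEntropy_eq_sum_negMulLog fun a cd => sum_nonneg fun b _ => hq a b cd.1 cd.2,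
    condMutualInfo_eq_sum_negMulLog (w := fun b c (ad : A × D) => r ad.1 b ad.2 * K b c)
      fun b c ad => hq ad.1 b c ad.2,
    condMutualInfo_eq_sum_negMulLog (w := fun b c d => ∑ a, r a b d * K b c)
      fun b c d => sum_nonneg fun a _ => hq a b c d]
  -- Expanded into joint entropies, the two sides differ by `H(C|A,B,D) - H(C|B,D)`, and both
  -- conditional entropies equal `∑ r(a,b,d) H(K(b,·))`.
  simp only [Fintype.sum_prod_type, ← sum_mul]
  simp only [sum_comm (γ := B) (α := A), sum_comm (γ := C) (α := A), sum_comm (γ := C) (α := D)]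
  simp only [hrK, ← mul_sum, hK1, mul_one, sum_negMulLog_mul_of_sum_eq_one (hK1 _)]
  simp only [sum_mul, sum_add_distrib, sum_comm (γ := B) (α := A), sum_comm (γ := D) (α := A)]
  ring

end Markov

section Encoders

set_option linter.unusedSectionVars false

def mXY1U2Y0 (x : X) (y1 : Y1) (u2 : U2) (y0 : Y0) : ℝ := ∑ y2, p x y0 y1 y2 * P2 y2 u2

variable (P1 : Y1 → U1 → ℝ)

lemma sum_joint_eq_mXY1U2Y0_mul (x : X) (y0 : Y0) (y1 : Y1) (u1 : U1) (u2 : U2) :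
    ∑ y2, joint p P1 P2 x y0 y1 y2 u1 u2 = mXY1U2Y0 p P2 x y1 u2 y0 * P1 y1 u1 := by
  simp only [joint, mXY1U2Y0, sum_mul]
  exact sum_congr rfl fun _ _ => by ring

lemma HXgU2Y0'_eq_condEntropy :
    HXgU2Y0' p P2 = condEntropy fun x (d : U2 × Y0) => ∑ y1, mXY1U2Y0 p P2 x y1 d.1 d.2 := by
  simp only [condEntropy, Fintype.sum_prod_type]
  rfl

lemma HXgU12Y0_eq_condEntropy :
    HXgU12Y0 p P1 P2 = condEntropy fun x (ud : U1 × U2 × Y0) =>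
      ∑ y1, mXY1U2Y0 p P2 x y1 ud.2.1 ud.2.2 * P1 y1 ud.1 := by
  simp only [condEntropy, Fintype.sum_prod_type, HXgU12Y0, mU12Y0, mXU12Y0,
    sum_joint_eq_mXY1U2Y0_mul]

lemma I1_eq_condMutualInfo :
    I1 p P1 P2 = condMutualInfo fun y1 u1 (d : U2 × Y0) =>
        ∑ x, mXY1U2Y0 p P2 x y1 d.1 d.2 * P1 y1 u1 := by
  simp only [I1, mY1U1U2Y0, mU2Y0, mY1U2Y0, mU12Y0, mXU2Y0, mXU12Y0, condMutualInfo,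
    Fintype.sum_prod_type, sum_comm (γ := Y2) (α := U1), sum_joint_eq_mXY1U2Y0_mul,
    sum_comm (γ := X) (α := Y1), sum_comm (γ := X) (α := U1)]

lemma I2_eq_I2' (hP1sum : ∀ y1, ∑ u1, P1 y1 u1 = 1) : I2 p P1 P2 = I2' p P2 := by
  simp only [I2, I2', mY2U2Y0, mY2U2Y0', mU2Y0, mU2Y0', mXU2Y0, mXU2Y0', joint,
    mul_right_comm _ (P1 _ _), ← mul_sum, hP1sum, mul_one, sum_mul]

/-- `I(Y1; U1 | X, U2, Y0)`. -/
def I1X : ℝ :=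
  condMutualInfo fun y1 u1 (xd : X × U2 × Y0) =>
    mXY1U2Y0 p P2 xd.1 y1 xd.2.1 xd.2.2 * P1 y1 u1

lemma I1X_const_eq_zero (g : U1 → ℝ) : I1X p P2 (fun _ => g) = 0 :=
  condMutualInfo_eq_zero_of_eq_mul (fun y1 xd => mXY1U2Y0 p P2 xd.1 y1 xd.2.1 xd.2.2)
    (fun u1 _ => g u1) fun _ _ _ => rfl

lemma I1_const_eq_zero (g : U1 → ℝ) : I1 p (fun _ => g) P2 = 0 := by
  rw [I1_eq_condMutualInfo]
  exact condMutualInfo_eq_zero_of_eq_mul (fun y1 d => ∑ x, mXY1U2Y0 p P2 x y1 d.1 d.2)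
    (fun u1 _ => g u1) fun _ _ _ => (sum_mul _ _ _).symm

variable {p P2 P1}

lemma mXY1U2Y0_nonneg (hp : ∀ x y0 y1 y2, 0 ≤ p x y0 y1 y2) (hP2 : ∀ y2 u2, 0 ≤ P2 y2 u2)
    (x : X) (y1 : Y1) (u2 : U2) (y0 : Y0) : 0 ≤ mXY1U2Y0 p P2 x y1 u2 y0 :=
  sum_nonneg fun _ _ => mul_nonneg (hp _ _ _ _) (hP2 _ _)

lemma I1X_nonneg (hp : ∀ x y0 y1 y2, 0 ≤ p x y0 y1 y2) (hP2 : ∀ y2 u2, 0 ≤ P2 y2 u2)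
    (hP1 : ∀ y1 u1, 0 ≤ P1 y1 u1) : 0 ≤ I1X p P2 P1 :=
  condMutualInfo_nonneg fun y1 u1 _ => mul_nonneg (mXY1U2Y0_nonneg hp hP2 _ _ _ _) (hP1 y1 u1)

lemma I1_nonneg (hp : ∀ x y0 y1 y2, 0 ≤ p x y0 y1 y2) (hP2 : ∀ y2 u2, 0 ≤ P2 y2 u2)
    (hP1 : ∀ y1 u1, 0 ≤ P1 y1 u1) : 0 ≤ I1 p P1 P2 := by
  rw [I1_eq_condMutualInfo]
  exact condMutualInfo_nonneg fun y1 u1 _ => sum_nonneg fun _ _ =>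
    mul_nonneg (mXY1U2Y0_nonneg hp hP2 _ _ _ _) (hP1 y1 u1)

lemma HXgU2Y0'_add_I1X_eq (hp : ∀ x y0 y1 y2, 0 ≤ p x y0 y1 y2) (hP2 : ∀ y2 u2, 0 ≤ P2 y2 u2)
    (hP1 : ∀ y1 u1, 0 ≤ P1 y1 u1) (hP1sum : ∀ y1, ∑ u1, P1 y1 u1 = 1) :
    HXgU2Y0' p P2 + I1X p P2 P1 = HXgU12Y0 p P1 P2 + I1 p P1 P2 := by
  rw [HXgU2Y0'_eq_condEntropy, HXgU12Y0_eq_condEntropy, I1_eq_condMutualInfo]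
  exact condEntropy_add_condMutualInfo_of_markov
    (fun x y1 d => mXY1U2Y0_nonneg hp hP2 x y1 d.1 d.2) hP1 hP1sum

end Encoders

theorem stmt5 [DecidableEq U1] (s1 s2 : ℝ) (hs1 : 1 < s1)
    (hp : ∀ x y0 y1 y2, 0 ≤ p x y0 y1 y2)
    (hP2 : ∀ y2 u2, 0 ≤ P2 y2 u2) :
    (∀ P1 : Y1 → U1 → ℝ, (∀ y1 u1, 0 ≤ P1 y1 u1) → (∀ y1, ∑ u1, P1 y1 u1 = 1) →
        HXgU2Y0' p P2 + s2 * I2' p P2 ≤ Fs p P1 P2 s1 s2) ∧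
      ∀ u0 : U1,
        Fs p (fun _ u1 => if u1 = u0 then (1 : ℝ) else 0) P2 s1 s2 =
          HXgU2Y0' p P2 + s2 * I2' p P2 := by
  refine ⟨fun P1 hP1 hP1sum => ?_, fun u0 => ?_⟩
  · have hchain := HXgU2Y0'_add_I1X_eq hp hP2 hP1 hP1sum
    have hI1X := I1X_nonneg hp hP2 hP1
    have hI1 : I1 p P1 P2 ≤ s1 * I1 p P1 P2 :=
      le_mul_of_one_le_left (I1_nonneg hp hP2 hP1) hs1.le
    rw [Fs, I2_eq_I2' p P2 P1 hP1sum]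
    linarith
  · have hδsum : ∀ y1 : Y1, ∑ u1, (if u1 = u0 then (1 : ℝ) else 0) = 1 := fun _ => by simp
    have hchain := HXgU2Y0'_add_I1X_eq (P1 := fun _ u1 => if u1 = u0 then (1 : ℝ) else 0)
      hp hP2 (fun _ _ => by positivity) hδsum
    rw [I1X_const_eq_zero, I1_const_eq_zero] at hchain
    rw [Fs, I1_const_eq_zero, I2_eq_I2' p P2 _ hδsum]
    linarith

end CEO
end
end

section
/- For fixed auxiliary pmfs Q, the minimizer over P_{U_k|Y_k} of the variational CEO objective F_s(P,Q), subject to Σ_{u_k} p(u_k|y_k) = 1 for each y_k, is the Gibbs-type distribution p(u_k|y_k) = q(u_k) exp(−ψ_k(u_k,y_k)) / Σ_{u_k'} q(u_k') exp(−ψ_k(u_k',y_k)), where ψ_k(u_k,y_k) = ((1−s1)/s_k) E_{U_{k̄},Y0|y_k} D(P_{X|y_k,U_{k̄},Y0}‖Q_{X|u_k,U_{k̄},Y0}) + (s1/s_k) E_{Y0|y_k} D(P_{X|y_k,Y0}‖Q_{X|u_k,Y0}) + D(P_{Y0|y_k}‖Q_{Y0|u_k}). -/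
open scoped BigOperators

noncomputable section

namespace CEO

variable {X Y0 Y1 Y2 U1 U2 : Type*}
  [Fintype X] [Fintype Y0] [Fintype Y1] [Fintype Y2] [Fintype U1] [Fintype U2]
variable (p : X → Y0 → Y1 → Y2 → ℝ) (P1 : Y1 → U1 → ℝ) (P2 : Y2 → U2 → ℝ)

def HXgY0 : ℝ := -∑ x, ∑ y0, mXY0 p x y0 * Real.log (mXY0 p x y0 / mY0 p y0)

def HY0 : ℝ := -∑ y0, mY0 p y0 * Real.log (mY0 p y0)

/-- The variational CEO cost `F_s(P, Q)` of the paper (eq. (24)). -/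
def FsQ (s1 s2 : ℝ)
    (QX12 : U1 → U2 → Y0 → X → ℝ) (QX1 : U1 → Y0 → X → ℝ) (QX2 : U2 → Y0 → X → ℝ)
    (QU1 : U1 → ℝ) (QU2 : U2 → ℝ)
    (QY01 : U1 → Y0 → ℝ) (QY02 : U2 → Y0 → ℝ) : ℝ :=
  -s1 * HXgY0 p - (s1 + s2) * HY0 p
    + ∑ x, ∑ y0, ∑ y1, ∑ y2, ∑ u1, ∑ u2, joint p P1 P2 x y0 y1 y2 u1 u2 *
      ((1 - s1) * (-Real.log (QX12 u1 u2 y0 x))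
        + s1 * (-Real.log (QX1 u1 y0 x)) + s1 * (-Real.log (QX2 u2 y0 x))
        + s1 * Real.log (P1 y1 u1 / QU1 u1) + s2 * Real.log (P2 y2 u2 / QU2 u2)
        + s1 * (-Real.log (QY01 u1 y0)) + s2 * (-Real.log (QY02 u2 y0)))

/-- Kullback–Leibler divergence between finitely supported distributions. -/
def klDiv {α : Type*} [Fintype α] (a b : α → ℝ) : ℝ := ∑ t, a t * Real.log (a t / b t)

/-- Conditional pmf `P(u2, y0 | y1)`. -/
def cU2Y0gY1 (u2 : U2) (y0 : Y0) (y1 : Y1) : ℝ :=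
  (∑ x, ∑ y2, p x y0 y1 y2 * P2 y2 u2) / mY1 p y1

/-- Conditional pmf `P(x | y1, u2, y0)`. -/
def cXgY1U2Y0 (x : X) (y1 : Y1) (u2 : U2) (y0 : Y0) : ℝ :=
  (∑ y2, p x y0 y1 y2 * P2 y2 u2) / (∑ x', ∑ y2, p x' y0 y1 y2 * P2 y2 u2)

/-- Conditional pmf `P(y0 | y1)`. -/
def cY0gY1 (y0 : Y0) (y1 : Y1) : ℝ := (∑ x, ∑ y2, p x y0 y1 y2) / mY1 p y1

/-- Conditional pmf `P(x | y1, y0)`. -/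
def cXgY1Y0 (x : X) (y1 : Y1) (y0 : Y0) : ℝ :=
  (∑ y2, p x y0 y1 y2) / (∑ x', ∑ y2, p x' y0 y1 y2)

/-- Conditional pmf `P(u1, y0 | y2)`. -/
def cU1Y0gY2 (u1 : U1) (y0 : Y0) (y2 : Y2) : ℝ :=
  (∑ x, ∑ y1, p x y0 y1 y2 * P1 y1 u1) / mY2 p y2

/-- Conditional pmf `P(x | y2, u1, y0)`. -/
def cXgY2U1Y0 (x : X) (y2 : Y2) (u1 : U1) (y0 : Y0) : ℝ :=
  (∑ y1, p x y0 y1 y2 * P1 y1 u1) / (∑ x', ∑ y1, p x' y0 y1 y2 * P1 y1 u1)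

/-- Conditional pmf `P(y0 | y2)`. -/
def cY0gY2 (y0 : Y0) (y2 : Y2) : ℝ := (∑ x, ∑ y1, p x y0 y1 y2) / mY2 p y2

/-- Conditional pmf `P(x | y2, y0)`. -/
def cXgY2Y0 (x : X) (y2 : Y2) (y0 : Y0) : ℝ :=
  (∑ y1, p x y0 y1 y2) / (∑ x', ∑ y1, p x' y0 y1 y2)

/-- The exponent `ψ₁(u1, y1)` of the paper (eq. (30)) for `k = 1`. -/
def psi1 (s1 : ℝ) (QX12 : U1 → U2 → Y0 → X → ℝ) (QX1 : U1 → Y0 → X → ℝ)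
    (QY01 : U1 → Y0 → ℝ) (u1 : U1) (y1 : Y1) : ℝ :=
  ((1 - s1) / s1) * ∑ u2, ∑ y0, cU2Y0gY1 p P2 u2 y0 y1 *
      klDiv (fun x => cXgY1U2Y0 p P2 x y1 u2 y0) (fun x => QX12 u1 u2 y0 x)
    + (s1 / s1) * ∑ y0, cY0gY1 p y0 y1 *
      klDiv (fun x => cXgY1Y0 p x y1 y0) (fun x => QX1 u1 y0 x)
    + klDiv (fun y0 => cY0gY1 p y0 y1) (fun y0 => QY01 u1 y0)

/-- The exponent `ψ₂(u2, y2)` of the paper (eq. (30)) for `k = 2`. -/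
def psi2 (s1 s2 : ℝ) (QX12 : U1 → U2 → Y0 → X → ℝ) (QX2 : U2 → Y0 → X → ℝ)
    (QY02 : U2 → Y0 → ℝ) (u2 : U2) (y2 : Y2) : ℝ :=
  ((1 - s1) / s2) * ∑ u1, ∑ y0, cU1Y0gY2 p P1 u1 y0 y2 *
      klDiv (fun x => cXgY2U1Y0 p P1 x y2 u1 y0) (fun x => QX12 u1 u2 y0 x)
    + (s1 / s2) * ∑ y0, cY0gY2 p y0 y2 *
      klDiv (fun x => cXgY2Y0 p x y2 y0) (fun x => QX2 u2 y0 x)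
    + klDiv (fun y0 => cY0gY2 p y0 y2) (fun y0 => QY02 u2 y0)

/-!
For fixed `P_{U2|Y2}`, the cost `F_s(P, Q)` depends on `P_{U1|Y1}` only through
`s1 ∑_{y1} p(y1) [∑_{u1} p(u1|y1) ψ₁(u1, y1) + D(P_{U1|y1} ‖ Q_{U1})]` plus a constant:
expanding the conditional divergences in `ψ₁` produces exactly the `-log Q` terms of `F_s`
that involve `u1`, up to entropies that do not depend on `u1`. Minimality of `F_s` therefore
makes each row `P_{U1|y1}` a minimizer of a free energy `⟪P, w⟫ + D(P ‖ q)` on the simplex.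
That free energy equals `D(P ‖ q e^{-w} / Z) - log Z`, so by Gibbs' inequality its only
minimizer is the Gibbs distribution `q e^{-w} / Z`. Once the weights `1 - s1` and `s1` of the
`Q_{X|…}` terms are treated as free parameters, the cost is symmetric under exchanging the two
encoders, which gives the statement for `k = 2`.
-/

open Finset InformationTheory

section Gibbs

variable {α : Type*} [Fintype α]

lemma mul_log_div_eq_mul_sub_log (x : ℝ) {y : ℝ} (hy : y ≠ 0) :
    x * Real.log (x / y) = x * (Real.log x - Real.log y) := by
  rcases eq_or_ne x 0 with rfl | hx
  · simp
  · rw [Real.log_div hx hy]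

lemma mul_klDiv_div (n Q : α → ℝ) {N : ℝ} (hN : N ≠ 0) (hQ : ∀ t, Q t ≠ 0) :
    N * klDiv (fun t => n t / N) Q
      = ∑ t, n t * Real.log (n t / N) - ∑ t, n t * Real.log (Q t) := by
  rw [klDiv, mul_sum, ← sum_sub_distrib]
  refine sum_congr rfl fun t _ => ?_
  rw [mul_log_div_eq_mul_sub_log _ (hQ t), ← mul_assoc, mul_div_cancel₀ _ hN, mul_sub]

lemma klDiv_eq_sum_mul_klFun {P R : α → ℝ} (hR : ∀ t, 0 < R t)
    (hsum : ∑ t, P t = ∑ t, R t) :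
    klDiv P R = ∑ t, R t * klFun (P t / R t) := by
  have h : ∀ t, R t * klFun (P t / R t) = P t * Real.log (P t / R t) + (R t - P t) := by
    intro t
    rw [klFun_apply, mul_sub, mul_add, ← mul_assoc, mul_div_cancel₀ _ (hR t).ne', mul_one]
    ring
  rw [sum_congr rfl fun t _ => h t, sum_add_distrib, sum_sub_distrib, hsum, sub_self, add_zero,
    klDiv]

lemma eq_of_klDiv_nonpos {P R : α → ℝ} (hP : ∀ t, 0 ≤ P t) (hR : ∀ t, 0 < R t)
    (hsum : ∑ t, P t = ∑ t, R t) (h : klDiv P R ≤ 0) : P = R := by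
  rw [klDiv_eq_sum_mul_klFun hR hsum] at h
  have hnonneg : ∀ t ∈ univ, 0 ≤ R t * klFun (P t / R t) := fun t _ =>
    mul_nonneg (hR t).le (klFun_nonneg (div_nonneg (hP t) (hR t).le))
  have hzero := (sum_eq_zero_iff_of_nonneg hnonneg).1 (le_antisymm h (sum_nonneg hnonneg))
  funext t
  have ht := (mul_eq_zero.1 (hzero t (mem_univ t))).resolve_left (hR t).ne'
  rwa [klFun_eq_zero_iff (div_nonneg (hP t) (hR t).le), div_eq_one_iff_eq (hR t).ne'] at ht

def gibbs (w q : α → ℝ) (u : α) : ℝ :=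
  q u * Real.exp (-w u) / ∑ u', q u' * Real.exp (-w u')

def freeEnergy (w q P : α → ℝ) : ℝ := ∑ u, P u * w u + klDiv P q

variable [Nonempty α] {w q : α → ℝ}

lemma partition_pos (hq : ∀ u, 0 < q u) : 0 < ∑ u, q u * Real.exp (-w u) :=
  sum_pos (fun u _ => mul_pos (hq u) (Real.exp_pos _)) univ_nonempty

lemma gibbs_pos (hq : ∀ u, 0 < q u) (u : α) : 0 < gibbs w q u :=
  div_pos (mul_pos (hq u) (Real.exp_pos _)) (partition_pos hq)

lemma gibbs_mem_stdSimplex (hq : ∀ u, 0 < q u) : gibbs w q ∈ stdSimplex ℝ α :=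
  ⟨fun u => (gibbs_pos hq u).le, by unfold gibbs; rw [← sum_div, div_self (partition_pos hq).ne']⟩

lemma freeEnergy_eq_klDiv_gibbs (hq : ∀ u, 0 < q u) {P : α → ℝ} (hP : ∑ u, P u = 1) :
    freeEnergy w q P = klDiv P (gibbs w q) - Real.log (∑ u, q u * Real.exp (-w u)) := by
  set L := Real.log (∑ u, q u * Real.exp (-w u))
  have hlog : ∀ u, Real.log (gibbs w q u) = Real.log (q u) - w u - L := by
    intro u
    unfold gibbs
    rw [Real.log_div (mul_pos (hq u) (Real.exp_pos _)).ne' (partition_pos hq).ne',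
      Real.log_mul (hq u).ne' (Real.exp_pos _).ne', Real.log_exp]
    ring
  have h : ∀ u, P u * (Real.log (P u) - (Real.log (q u) - w u - L))
      = (P u * w u + P u * (Real.log (P u) - Real.log (q u))) + P u * L := fun u => by ring
  simp only [freeEnergy, klDiv, mul_log_div_eq_mul_sub_log _ (hq _).ne',
    mul_log_div_eq_mul_sub_log _ (gibbs_pos hq _).ne', hlog]
  rw [sum_congr rfl fun u _ => h u, sum_add_distrib, sum_add_distrib, ← sum_mul, hP]
  ring

theorem eq_gibbs_of_isMinOn (hq : ∀ u, 0 < q u) {P : α → ℝ} (hP : P ∈ stdSimplex ℝ α)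
    (hmin : IsMinOn (freeEnergy w q) (stdSimplex ℝ α) P) : P = gibbs w q := by
  have h := isMinOn_iff.1 hmin _ (gibbs_mem_stdSimplex (w := w) hq)
  rw [freeEnergy_eq_klDiv_gibbs hq hP.2, freeEnergy_eq_klDiv_gibbs hq (gibbs_mem_stdSimplex hq).2,
    sub_le_sub_iff_right] at h
  refine eq_of_klDiv_nonpos hP.1 (gibbs_pos hq) ?_ ?_
  · rw [hP.2, (gibbs_mem_stdSimplex hq).2]
  · simpa [klDiv] using h

end Gibbs

theorem isMinOn_row_of_isMinOn_sum {ι α : Type*} [Fintype ι] {m : ι → ℝ}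
    (hm : ∀ i, 0 < m i) {G : ι → (α → ℝ) → ℝ} {S : Set (α → ℝ)} {P : ι → α → ℝ}
    (hP : ∀ i, P i ∈ S)
    (hmin : IsMinOn (fun P' => ∑ i, m i * G i (P' i)) {P' | ∀ i, P' i ∈ S} P) (i : ι) :
    IsMinOn (G i) S (P i) := by
  classical
  refine isMinOn_iff.2 fun R hR => ?_
  have h := isMinOn_iff.1 hmin (Function.update P i R) fun j => by
    rcases eq_or_ne j i with rfl | hj
    · simpa using hR
    · simpa [hj] using hP j
  have hrest : ∑ j ∈ univ.erase i, m j * G j (Function.update P i R j)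
      = ∑ j ∈ univ.erase i, m j * G j (P j) :=
    sum_congr rfl fun j hj => by rw [Function.update_of_ne (ne_of_mem_erase hj)]
  simp only [← add_sum_erase _ _ (mem_univ i), Function.update_self] at h
  rw [hrest, add_le_add_iff_right] at h
  exact le_of_mul_le_mul_left h (hm i)

omit [Fintype U1] [Fintype U2] in
lemma nonempty_of_sum4_ne_zero (h : ∑ x, ∑ y0, ∑ y1, ∑ y2, p x y0 y1 y2 ≠ 0) :
    Nonempty X ∧ Nonempty Y0 ∧ Nonempty Y1 ∧ Nonempty Y2 := by
  obtain ⟨x, -, hx⟩ := exists_ne_zero_of_sum_ne_zero h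
  obtain ⟨y0, -, hy0⟩ := exists_ne_zero_of_sum_ne_zero hx
  obtain ⟨y1, -, hy1⟩ := exists_ne_zero_of_sum_ne_zero hy0
  obtain ⟨y2, -, -⟩ := exists_ne_zero_of_sum_ne_zero hy1
  exact ⟨⟨x⟩, ⟨y0⟩, ⟨y1⟩, ⟨y2⟩⟩

omit [Fintype Y1] [Fintype U1] in
lemma mY1_pos (hp : ∀ x y0 y1 y2, 0 < p x y0 y1 y2) [Nonempty X] [Nonempty Y0] [Nonempty Y2]
    (y1 : Y1) : 0 < mY1 p y1 :=
  sum_pos (fun x _ => sum_pos (fun y0 _ => sum_pos (fun y2 _ => hp x y0 y1 y2)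
    univ_nonempty) univ_nonempty) univ_nonempty

omit [Fintype Y1] [Fintype U1] in
lemma sum_mul_P2_eq_mY1 (hP2sum : ∀ y2, ∑ u2, P2 y2 u2 = 1) (y1 : Y1) :
    ∑ x, ∑ y0, ∑ y2, ∑ u2, p x y0 y1 y2 * P2 y2 u2 = mY1 p y1 := by
  simp only [← mul_sum, hP2sum, mul_one, mY1]

lemma sum_mul_P1_eq_sum_rows (F : X → Y0 → Y1 → Y2 → U1 → U2 → ℝ) :
    ∑ x, ∑ y0, ∑ y1, ∑ y2, ∑ u1, ∑ u2, P1 y1 u1 * F x y0 y1 y2 u1 u2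
      = ∑ y1, ∑ u1, P1 y1 u1 * ∑ x, ∑ y0, ∑ y2, ∑ u2, F x y0 y1 y2 u1 u2 := by
  simp only [mul_sum]
  simp only [sum_comm (γ := X) (α := Y1), sum_comm (γ := Y0) (α := Y1),
    sum_comm (γ := X) (α := U1), sum_comm (γ := Y0) (α := U1), sum_comm (γ := Y2) (α := U1)]

lemma sum_mul_P1_of_sum_eq_one (hP1sum : ∀ y1, ∑ u1, P1 y1 u1 = 1)
    (G : X → Y0 → Y1 → Y2 → U2 → ℝ) :
    ∑ x, ∑ y0, ∑ y1, ∑ y2, ∑ u1, ∑ u2, P1 y1 u1 * G x y0 y1 y2 u2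
      = ∑ x, ∑ y0, ∑ y1, ∑ y2, ∑ u2, G x y0 y1 y2 u2 := by
  simp only [sum_comm (γ := U1) (α := U2), ← sum_mul, hP1sum, one_mul]

/-- `psi1` with its weights `1 - s1`, `s1` and `s1` replaced by `a`, `b` and `s`; `psi2` is the
instance obtained by exchanging the two encoders. -/
def psiGen (a b s : ℝ) (QX12 : U1 → U2 → Y0 → X → ℝ) (QX1 : U1 → Y0 → X → ℝ)
    (QY01 : U1 → Y0 → ℝ) (u1 : U1) (y1 : Y1) : ℝ :=
  (a / s) * ∑ u2, ∑ y0, cU2Y0gY1 p P2 u2 y0 y1 *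
      klDiv (fun x => cXgY1U2Y0 p P2 x y1 u2 y0) (fun x => QX12 u1 u2 y0 x)
    + (b / s) * ∑ y0, cY0gY1 p y0 y1 *
      klDiv (fun x => cXgY1Y0 p x y1 y0) (fun x => QX1 u1 y0 x)
    + klDiv (fun y0 => cY0gY1 p y0 y1) (fun y0 => QY01 u1 y0)

omit [Fintype Y1] [Fintype U1] in
lemma psi1_eq_psiGen (s1 : ℝ) (QX12 : U1 → U2 → Y0 → X → ℝ) (QX1 : U1 → Y0 → X → ℝ)
    (QY01 : U1 → Y0 → ℝ) :
    psi1 p P2 s1 QX12 QX1 QY01 = psiGen p P2 (1 - s1) s1 s1 QX12 QX1 QY01 := rfl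

omit [Fintype Y2] [Fintype U2] in
lemma psi2_eq_psiGen (s1 s2 : ℝ) (QX12 : U1 → U2 → Y0 → X → ℝ) (QX2 : U2 → Y0 → X → ℝ)
    (QY02 : U2 → Y0 → ℝ) :
    psi2 p P1 s1 s2 QX12 QX2 QY02 = psiGen (fun x y0 y2 y1 => p x y0 y1 y2) P1 (1 - s1) s1 s2
      (fun u2 u1 y0 x => QX12 u1 u2 y0 x) QX2 QY02 := rfl

section Exponent

omit [Fintype Y1] [Fintype U1]

variable {p P2} [Nonempty X] [Nonempty Y0] [Nonempty Y2] (hp : ∀ x y0 y1 y2, 0 < p x y0 y1 y2)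
include hp

lemma mY1_mul_sum_cU2Y0gY1_mul_klDiv (hP2 : ∀ y2 u2, 0 < P2 y2 u2) {Q : U2 → Y0 → X → ℝ}
    (hQ : ∀ u2 y0 x, 0 < Q u2 y0 x) (y1 : Y1) :
    mY1 p y1 * ∑ u2, ∑ y0, cU2Y0gY1 p P2 u2 y0 y1 *
        klDiv (fun x => cXgY1U2Y0 p P2 x y1 u2 y0) (fun x => Q u2 y0 x)
      = ∑ u2, ∑ y0, ∑ x, (∑ y2, p x y0 y1 y2 * P2 y2 u2) * Real.log (cXgY1U2Y0 p P2 x y1 u2 y0)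
        - ∑ u2, ∑ y0, ∑ x, (∑ y2, p x y0 y1 y2 * P2 y2 u2) * Real.log (Q u2 y0 x) := by
  have h : ∀ u2 y0, mY1 p y1 * (cU2Y0gY1 p P2 u2 y0 y1 *
        klDiv (fun x => cXgY1U2Y0 p P2 x y1 u2 y0) (fun x => Q u2 y0 x))
      = ∑ x, (∑ y2, p x y0 y1 y2 * P2 y2 u2) * Real.log (cXgY1U2Y0 p P2 x y1 u2 y0)
        - ∑ x, (∑ y2, p x y0 y1 y2 * P2 y2 u2) * Real.log (Q u2 y0 x) := fun u2 y0 => by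
    have hN : ∑ x, ∑ y2, p x y0 y1 y2 * P2 y2 u2 ≠ 0 :=
      (sum_pos (fun x _ => sum_pos (fun y2 _ => mul_pos (hp x y0 y1 y2) (hP2 y2 u2))
        univ_nonempty) univ_nonempty).ne'
    rw [cU2Y0gY1, ← mul_assoc, mul_div_cancel₀ _ (mY1_pos p hp y1).ne']
    exact mul_klDiv_div (fun x => ∑ y2, p x y0 y1 y2 * P2 y2 u2) _ hN fun x => (hQ u2 y0 x).ne'
  simp only [mul_sum, h, sum_sub_distrib]

lemma mY1_mul_sum_cY0gY1_mul_klDiv {Q : Y0 → X → ℝ} (hQ : ∀ y0 x, 0 < Q y0 x) (y1 : Y1) :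
    mY1 p y1 * ∑ y0, cY0gY1 p y0 y1 * klDiv (fun x => cXgY1Y0 p x y1 y0) (fun x => Q y0 x)
      = ∑ y0, ∑ x, (∑ y2, p x y0 y1 y2) * Real.log (cXgY1Y0 p x y1 y0)
        - ∑ y0, ∑ x, (∑ y2, p x y0 y1 y2) * Real.log (Q y0 x) := by
  have h : ∀ y0, mY1 p y1 * (cY0gY1 p y0 y1 *
        klDiv (fun x => cXgY1Y0 p x y1 y0) (fun x => Q y0 x))
      = ∑ x, (∑ y2, p x y0 y1 y2) * Real.log (cXgY1Y0 p x y1 y0)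
        - ∑ x, (∑ y2, p x y0 y1 y2) * Real.log (Q y0 x) := fun y0 => by
    have hK : ∑ x, ∑ y2, p x y0 y1 y2 ≠ 0 :=
      (sum_pos (fun x _ => sum_pos (fun y2 _ => hp x y0 y1 y2) univ_nonempty) univ_nonempty).ne'
    rw [cY0gY1, ← mul_assoc, mul_div_cancel₀ _ (mY1_pos p hp y1).ne']
    exact mul_klDiv_div (fun x => ∑ y2, p x y0 y1 y2) _ hK fun x => (hQ y0 x).ne'
  simp only [mul_sum, h, sum_sub_distrib]

lemma mY1_mul_klDiv_cY0gY1 {Q : Y0 → ℝ} (hQ : ∀ y0, 0 < Q y0) (y1 : Y1) :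
    mY1 p y1 * klDiv (fun y0 => cY0gY1 p y0 y1) (fun y0 => Q y0)
      = ∑ y0, (∑ x, ∑ y2, p x y0 y1 y2) * Real.log (cY0gY1 p y0 y1)
        - ∑ y0, (∑ x, ∑ y2, p x y0 y1 y2) * Real.log (Q y0) :=
  mul_klDiv_div _ _ (mY1_pos p hp y1).ne' fun y0 => (hQ y0).ne'

end Exponent

omit [Fintype Y1] [Fintype U1] in
lemma sum_mul_P2_mul_neg_log (hP2sum : ∀ y2, ∑ u2, P2 y2 u2 = 1) (a b s : ℝ)
    (QX12 : U2 → Y0 → X → ℝ) (QX1 : Y0 → X → ℝ) (QY01 : Y0 → ℝ) (y1 : Y1) :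
    ∑ x, ∑ y0, ∑ y2, ∑ u2, p x y0 y1 y2 * P2 y2 u2 *
        (a * (-Real.log (QX12 u2 y0 x)) + b * (-Real.log (QX1 y0 x)) + s * (-Real.log (QY01 y0)))
      = -(a * ∑ u2, ∑ y0, ∑ x, (∑ y2, p x y0 y1 y2 * P2 y2 u2) * Real.log (QX12 u2 y0 x)
        + b * ∑ y0, ∑ x, (∑ y2, p x y0 y1 y2) * Real.log (QX1 y0 x)
        + s * ∑ y0, (∑ x, ∑ y2, p x y0 y1 y2) * Real.log (QY01 y0)) := by
  have hX12 : ∑ x, ∑ y0, ∑ y2, ∑ u2, p x y0 y1 y2 * P2 y2 u2 * Real.log (QX12 u2 y0 x)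
      = ∑ u2, ∑ y0, ∑ x, (∑ y2, p x y0 y1 y2 * P2 y2 u2) * Real.log (QX12 u2 y0 x) := by
    simp only [sum_mul]
    simp only [sum_comm (γ := X) (α := U2), sum_comm (γ := Y0) (α := U2),
      sum_comm (γ := Y2) (α := U2), sum_comm (γ := X) (α := Y0)]
  have hmarg : ∀ g : Y0 → X → ℝ, ∑ x, ∑ y0, ∑ y2, ∑ u2, p x y0 y1 y2 * P2 y2 u2 * g y0 x
      = ∑ y0, ∑ x, (∑ y2, p x y0 y1 y2) * g y0 x := fun g => by
    simp only [mul_right_comm _ (P2 _ _), ← sum_mul, ← mul_sum, hP2sum, mul_one]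
    rw [sum_comm]
  have hY01 : ∑ y0, ∑ x, (∑ y2, p x y0 y1 y2) * Real.log (QY01 y0)
      = ∑ y0, (∑ x, ∑ y2, p x y0 y1 y2) * Real.log (QY01 y0) := by
    simp only [sum_mul]
  have hexp : ∀ x y0 y2 u2, p x y0 y1 y2 * P2 y2 u2 *
        (a * (-Real.log (QX12 u2 y0 x)) + b * (-Real.log (QX1 y0 x)) + s * (-Real.log (QY01 y0)))
      = -(a * (p x y0 y1 y2 * P2 y2 u2 * Real.log (QX12 u2 y0 x))
        + b * (p x y0 y1 y2 * P2 y2 u2 * Real.log (QX1 y0 x))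
        + s * (p x y0 y1 y2 * P2 y2 u2 * Real.log (QY01 y0))) := fun _ _ _ _ => by ring
  simp only [hexp, sum_neg_distrib, sum_add_distrib, ← mul_sum]
  rw [hX12, hmarg (fun y0 x => Real.log (QX1 y0 x)), hmarg (fun y0 _ => Real.log (QY01 y0)), hY01]

omit [Fintype Y1] [Fintype U1] in
/-- The `u1`-dependent linear part of the cost is `s ψ` weighted by `p(y1)`, up to a term
depending on `y1` only (the conditional entropies produced by expanding the divergences). -/
theorem exists_sum_mul_P2_mul_neg_log_eq {a b s : ℝ} (hs : s ≠ 0)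
    (hp : ∀ x y0 y1 y2, 0 < p x y0 y1 y2)
    (hP2 : ∀ y2 u2, 0 < P2 y2 u2) (hP2sum : ∀ y2, ∑ u2, P2 y2 u2 = 1)
    [Nonempty X] [Nonempty Y0] [Nonempty Y2]
    {QX12 : U1 → U2 → Y0 → X → ℝ} {QX1 : U1 → Y0 → X → ℝ} {QY01 : U1 → Y0 → ℝ}
    (hQX12 : ∀ u1 u2 y0 x, 0 < QX12 u1 u2 y0 x) (hQX1 : ∀ u1 y0 x, 0 < QX1 u1 y0 x)
    (hQY01 : ∀ u1 y0, 0 < QY01 u1 y0) :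
    ∃ ent : Y1 → ℝ, ∀ u1 y1,
      ∑ x, ∑ y0, ∑ y2, ∑ u2, p x y0 y1 y2 * P2 y2 u2 *
          (a * (-Real.log (QX12 u1 u2 y0 x)) + b * (-Real.log (QX1 u1 y0 x))
            + s * (-Real.log (QY01 u1 y0)))
        = s * mY1 p y1 * psiGen p P2 a b s QX12 QX1 QY01 u1 y1 - ent y1 := by
  refine ⟨fun y1 =>
      a * ∑ u2, ∑ y0, ∑ x, (∑ y2, p x y0 y1 y2 * P2 y2 u2) * Real.log (cXgY1U2Y0 p P2 x y1 u2 y0)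
      + b * ∑ y0, ∑ x, (∑ y2, p x y0 y1 y2) * Real.log (cXgY1Y0 p x y1 y0)
      + s * ∑ y0, (∑ x, ∑ y2, p x y0 y1 y2) * Real.log (cY0gY1 p y0 y1), fun u1 y1 => ?_⟩
  have hpsi : s * mY1 p y1 * psiGen p P2 a b s QX12 QX1 QY01 u1 y1
      = a * (mY1 p y1 * ∑ u2, ∑ y0, cU2Y0gY1 p P2 u2 y0 y1 *
          klDiv (fun x => cXgY1U2Y0 p P2 x y1 u2 y0) (fun x => QX12 u1 u2 y0 x))
        + b * (mY1 p y1 * ∑ y0, cY0gY1 p y0 y1 *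
          klDiv (fun x => cXgY1Y0 p x y1 y0) (fun x => QX1 u1 y0 x))
        + s * (mY1 p y1 * klDiv (fun y0 => cY0gY1 p y0 y1) (fun y0 => QY01 u1 y0)) := by
    unfold psiGen
    field_simp
  rw [sum_mul_P2_mul_neg_log p P2 hP2sum, hpsi,
    mY1_mul_sum_cU2Y0gY1_mul_klDiv hp hP2 (hQX12 u1), mY1_mul_sum_cY0gY1_mul_klDiv hp (hQX1 u1),
    mY1_mul_klDiv_cY0gY1 hp (hQY01 u1)]
  ring

/-- `F_s(P, Q)` without its `P`-independent entropy terms, and with the weights `1 - s1` and `s1`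
of the `Q_{X|…}` terms replaced by `a` and `b`, so that exchanging the two encoders maps it to an
instance of itself (`encCost_swap`). -/
def encCost (a b s1 s2 : ℝ)
    (QX12 : U1 → U2 → Y0 → X → ℝ) (QX1 : U1 → Y0 → X → ℝ) (QX2 : U2 → Y0 → X → ℝ)
    (QU1 : U1 → ℝ) (QU2 : U2 → ℝ)
    (QY01 : U1 → Y0 → ℝ) (QY02 : U2 → Y0 → ℝ) : ℝ :=
  ∑ x, ∑ y0, ∑ y1, ∑ y2, ∑ u1, ∑ u2, joint p P1 P2 x y0 y1 y2 u1 u2 *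
      (a * (-Real.log (QX12 u1 u2 y0 x))
        + b * (-Real.log (QX1 u1 y0 x)) + b * (-Real.log (QX2 u2 y0 x))
        + s1 * Real.log (P1 y1 u1 / QU1 u1) + s2 * Real.log (P2 y2 u2 / QU2 u2)
        + s1 * (-Real.log (QY01 u1 y0)) + s2 * (-Real.log (QY02 u2 y0)))

lemma FsQ_eq_add_encCost (s1 s2 : ℝ)
    (QX12 : U1 → U2 → Y0 → X → ℝ) (QX1 : U1 → Y0 → X → ℝ) (QX2 : U2 → Y0 → X → ℝ)
    (QU1 : U1 → ℝ) (QU2 : U2 → ℝ) (QY01 : U1 → Y0 → ℝ) (QY02 : U2 → Y0 → ℝ) :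
    FsQ p P1 P2 s1 s2 QX12 QX1 QX2 QU1 QU2 QY01 QY02
      = -s1 * HXgY0 p - (s1 + s2) * HY0 p
        + encCost p P1 P2 (1 - s1) s1 s1 s2 QX12 QX1 QX2 QU1 QU2 QY01 QY02 := rfl

theorem encCost_swap (a b s1 s2 : ℝ)
    (QX12 : U1 → U2 → Y0 → X → ℝ) (QX1 : U1 → Y0 → X → ℝ) (QX2 : U2 → Y0 → X → ℝ)
    (QU1 : U1 → ℝ) (QU2 : U2 → ℝ) (QY01 : U1 → Y0 → ℝ) (QY02 : U2 → Y0 → ℝ) :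
    encCost p P1 P2 a b s1 s2 QX12 QX1 QX2 QU1 QU2 QY01 QY02
      = encCost (fun x y0 y2 y1 => p x y0 y1 y2) P2 P1 a b s2 s1
          (fun u2 u1 y0 x => QX12 u1 u2 y0 x) QX2 QX1 QU2 QU1 QY02 QY01 := by
  unfold encCost joint
  simp only [sum_comm (γ := Y1) (α := Y2), sum_comm (γ := U1) (α := U2)]
  refine sum_congr rfl fun x _ => sum_congr rfl fun y0 _ => sum_congr rfl fun y2 _ =>
    sum_congr rfl fun y1 _ => sum_congr rfl fun u2 _ => sum_congr rfl fun u1 _ => ?_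
  ring

theorem encCost_eq_sum_freeEnergy {a b s1 s2 : ℝ} (hs1 : s1 ≠ 0)
    (hp : ∀ x y0 y1 y2, 0 < p x y0 y1 y2)
    (hP2 : ∀ y2 u2, 0 < P2 y2 u2) (hP2sum : ∀ y2, ∑ u2, P2 y2 u2 = 1)
    [Nonempty X] [Nonempty Y0] [Nonempty Y2]
    {QX12 : U1 → U2 → Y0 → X → ℝ} {QX1 : U1 → Y0 → X → ℝ} {QY01 : U1 → Y0 → ℝ}
    (hQX12 : ∀ u1 u2 y0 x, 0 < QX12 u1 u2 y0 x) (hQX1 : ∀ u1 y0 x, 0 < QX1 u1 y0 x)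
    (hQY01 : ∀ u1 y0, 0 < QY01 u1 y0)
    (QX2 : U2 → Y0 → X → ℝ) (QU1 : U1 → ℝ) (QU2 : U2 → ℝ) (QY02 : U2 → Y0 → ℝ) :
    ∃ C, ∀ P1' : Y1 → U1 → ℝ, (∀ y1, ∑ u1, P1' y1 u1 = 1) →
      encCost p P1' P2 a b s1 s2 QX12 QX1 QX2 QU1 QU2 QY01 QY02
        = C + ∑ y1, s1 * mY1 p y1 *
          freeEnergy (fun u1 => psiGen p P2 a b s1 QX12 QX1 QY01 u1 y1) QU1 (P1' y1) := by
  obtain ⟨ent, hent⟩ :=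
    exists_sum_mul_P2_mul_neg_log_eq p P2 hs1 hp hP2 hP2sum hQX12 hQX1 hQY01 (a := a) (b := b)
  refine ⟨∑ x, ∑ y0, ∑ y1, ∑ y2, ∑ u2, p x y0 y1 y2 * P2 y2 u2 *
      (b * (-Real.log (QX2 u2 y0 x)) + s2 * Real.log (P2 y2 u2 / QU2 u2)
        + s2 * (-Real.log (QY02 u2 y0))) - ∑ y1, ent y1, fun P1 hrows => ?_⟩
  have hsplit : ∀ x y0 y1 y2 u1 u2, joint p P1 P2 x y0 y1 y2 u1 u2 *
      (a * (-Real.log (QX12 u1 u2 y0 x))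
        + b * (-Real.log (QX1 u1 y0 x)) + b * (-Real.log (QX2 u2 y0 x))
        + s1 * Real.log (P1 y1 u1 / QU1 u1) + s2 * Real.log (P2 y2 u2 / QU2 u2)
        + s1 * (-Real.log (QY01 u1 y0)) + s2 * (-Real.log (QY02 u2 y0)))
      = P1 y1 u1 * (p x y0 y1 y2 * P2 y2 u2 *
          (a * (-Real.log (QX12 u1 u2 y0 x)) + b * (-Real.log (QX1 u1 y0 x))
            + s1 * (-Real.log (QY01 u1 y0))))
        + P1 y1 u1 * (p x y0 y1 y2 * P2 y2 u2 * (s1 * Real.log (P1 y1 u1 / QU1 u1)))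
        + P1 y1 u1 * (p x y0 y1 y2 * P2 y2 u2 *
          (b * (-Real.log (QX2 u2 y0 x)) + s2 * Real.log (P2 y2 u2 / QU2 u2)
            + s2 * (-Real.log (QY02 u2 y0)))) := fun _ _ _ _ _ _ => by
    unfold joint
    ring
  have hrow : ∀ y1, ∑ u1, P1 y1 u1 * (s1 * mY1 p y1 * psiGen p P2 a b s1 QX12 QX1 QY01 u1 y1
        - ent y1) + ∑ u1, P1 y1 u1 * (mY1 p y1 * (s1 * Real.log (P1 y1 u1 / QU1 u1)))
      = s1 * mY1 p y1 * freeEnergy (fun u1 => psiGen p P2 a b s1 QX12 QX1 QY01 u1 y1) QU1 (P1 y1)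
        - ent y1 := fun y1 => by
    have h : ∀ u1, P1 y1 u1 * (s1 * mY1 p y1 * psiGen p P2 a b s1 QX12 QX1 QY01 u1 y1 - ent y1)
          + P1 y1 u1 * (mY1 p y1 * (s1 * Real.log (P1 y1 u1 / QU1 u1)))
        = s1 * mY1 p y1 * (P1 y1 u1 * psiGen p P2 a b s1 QX12 QX1 QY01 u1 y1
          + P1 y1 u1 * Real.log (P1 y1 u1 / QU1 u1)) - P1 y1 u1 * ent y1 := fun u1 => by ring
    rw [← sum_add_distrib, sum_congr rfl fun u1 _ => h u1, sum_sub_distrib, ← mul_sum, ← sum_mul,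
      hrows, one_mul, sum_add_distrib, freeEnergy, klDiv]
  simp only [encCost, hsplit, sum_add_distrib]
  rw [sum_mul_P1_of_sum_eq_one P1 hrows, sum_mul_P1_eq_sum_rows, sum_mul_P1_eq_sum_rows]
  simp only [hent, ← sum_mul, sum_mul_P2_eq_mY1 p P2 hP2sum]
  rw [← sum_add_distrib, sum_congr rfl fun y1 _ => hrow y1, sum_sub_distrib]
  ring

theorem eq_gibbs_of_isMinOn_encCost {a b s1 s2 : ℝ} (hs1 : 0 < s1)
    (hp : ∀ x y0 y1 y2, 0 < p x y0 y1 y2)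
    (hP2 : ∀ y2 u2, 0 < P2 y2 u2) (hP2sum : ∀ y2, ∑ u2, P2 y2 u2 = 1)
    [Nonempty X] [Nonempty Y0] [Nonempty Y2]
    {QX12 : U1 → U2 → Y0 → X → ℝ} {QX1 : U1 → Y0 → X → ℝ} {QU1 : U1 → ℝ}
    {QY01 : U1 → Y0 → ℝ} (hQX12 : ∀ u1 u2 y0 x, 0 < QX12 u1 u2 y0 x)
    (hQX1 : ∀ u1 y0 x, 0 < QX1 u1 y0 x) (hQU1 : ∀ u1, 0 < QU1 u1)
    (hQY01 : ∀ u1 y0, 0 < QY01 u1 y0)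
    (QX2 : U2 → Y0 → X → ℝ) (QU2 : U2 → ℝ) (QY02 : U2 → Y0 → ℝ)
    (hP1 : ∀ y1, P1 y1 ∈ stdSimplex ℝ U1)
    (hmin : IsMinOn (fun P1' => encCost p P1' P2 a b s1 s2 QX12 QX1 QX2 QU1 QU2 QY01 QY02)
      {P1' | ∀ y1, P1' y1 ∈ stdSimplex ℝ U1} P1) (y1 : Y1) :
    P1 y1 = gibbs (fun u1 => psiGen p P2 a b s1 QX12 QX1 QY01 u1 y1) QU1 := by
  have : Nonempty U1 :=
    (nonempty_of_sum_ne_zero ((hP1 y1).2.symm ▸ one_ne_zero : ∑ u1, P1 y1 u1 ≠ 0)).to_type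
  obtain ⟨C, hC⟩ := encCost_eq_sum_freeEnergy p P2 hs1.ne' hp hP2 hP2sum hQX12 hQX1 hQY01
    QX2 QU1 QU2 QY02 (a := a) (s2 := s2)
  have hrows : IsMinOn
      (fun P1' => ∑ y1, s1 * mY1 p y1 *
        freeEnergy (fun u1 => psiGen p P2 a b s1 QX12 QX1 QY01 u1 y1) QU1 (P1' y1))
      {P1' | ∀ y1, P1' y1 ∈ stdSimplex ℝ U1} P1 :=
    isMinOn_iff.2 fun P1' hP1' => by
      have h := isMinOn_iff.1 hmin P1' hP1'
      rwa [hC P1 fun y1 => (hP1 y1).2, hC P1' fun y1 => (hP1' y1).2, add_le_add_iff_left] at h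
  exact eq_gibbs_of_isMinOn hQU1 (hP1 y1)
    (isMinOn_row_of_isMinOn_sum (fun y1 => mul_pos hs1 (mY1_pos p hp y1)) hP1 hrows y1)

theorem stmt14 (s1 s2 : ℝ) (hs1 : 0 < s1) (hs2 : 0 < s2)
    (hp : ∀ x y0 y1 y2, 0 < p x y0 y1 y2)
    (hpsum : ∑ x, ∑ y0, ∑ y1, ∑ y2, p x y0 y1 y2 = 1)
    (QX12 : U1 → U2 → Y0 → X → ℝ) (QX1 : U1 → Y0 → X → ℝ) (QX2 : U2 → Y0 → X → ℝ)
    (QU1 : U1 → ℝ) (QU2 : U2 → ℝ) (QY01 : U1 → Y0 → ℝ) (QY02 : U2 → Y0 → ℝ)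
    (hQX12 : ∀ u1 u2 y0 x, 0 < QX12 u1 u2 y0 x)
    (hQX1 : ∀ u1 y0 x, 0 < QX1 u1 y0 x) (hQX2 : ∀ u2 y0 x, 0 < QX2 u2 y0 x)
    (hQU1 : ∀ u1, 0 < QU1 u1) (hQU2 : ∀ u2, 0 < QU2 u2)
    (hQY01 : ∀ u1 y0, 0 < QY01 u1 y0) (hQY02 : ∀ u2 y0, 0 < QY02 u2 y0)
    (hP1 : ∀ y1 u1, 0 < P1 y1 u1) (hP1sum : ∀ y1, ∑ u1, P1 y1 u1 = 1)
    (hP2 : ∀ y2 u2, 0 < P2 y2 u2) (hP2sum : ∀ y2, ∑ u2, P2 y2 u2 = 1)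
    (hmin : ∀ (P1' : Y1 → U1 → ℝ) (P2' : Y2 → U2 → ℝ),
      (∀ y1 u1, 0 ≤ P1' y1 u1) → (∀ y1, ∑ u1, P1' y1 u1 = 1) →
      (∀ y2 u2, 0 ≤ P2' y2 u2) → (∀ y2, ∑ u2, P2' y2 u2 = 1) →
      FsQ p P1 P2 s1 s2 QX12 QX1 QX2 QU1 QU2 QY01 QY02 ≤
        FsQ p P1' P2' s1 s2 QX12 QX1 QX2 QU1 QU2 QY01 QY02) :
    (∀ y1 u1, P1 y1 u1 =
        QU1 u1 * Real.exp (-psi1 p P2 s1 QX12 QX1 QY01 u1 y1) /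
          ∑ u1', QU1 u1' * Real.exp (-psi1 p P2 s1 QX12 QX1 QY01 u1' y1)) ∧
      (∀ y2 u2, P2 y2 u2 =
        QU2 u2 * Real.exp (-psi2 p P1 s1 s2 QX12 QX2 QY02 u2 y2) /
          ∑ u2', QU2 u2' * Real.exp (-psi2 p P1 s1 s2 QX12 QX2 QY02 u2' y2)) := by
  obtain ⟨_, _, _, _⟩ := nonempty_of_sum4_ne_zero p (hpsum ▸ one_ne_zero)
  have hP1mem : ∀ y1, P1 y1 ∈ stdSimplex ℝ U1 := fun y1 => ⟨fun u1 => (hP1 y1 u1).le, hP1sum y1⟩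
  have hP2mem : ∀ y2, P2 y2 ∈ stdSimplex ℝ U2 := fun y2 => ⟨fun u2 => (hP2 y2 u2).le, hP2sum y2⟩
  have hcost : ∀ P1' P2', (∀ y1, P1' y1 ∈ stdSimplex ℝ U1) → (∀ y2, P2' y2 ∈ stdSimplex ℝ U2) →
      encCost p P1 P2 (1 - s1) s1 s1 s2 QX12 QX1 QX2 QU1 QU2 QY01 QY02
        ≤ encCost p P1' P2' (1 - s1) s1 s1 s2 QX12 QX1 QX2 QU1 QU2 QY01 QY02 :=
    fun P1' P2' h1 h2 => by
      have h := hmin P1' P2' (fun y1 => (h1 y1).1) (fun y1 => (h1 y1).2) (fun y2 => (h2 y2).1)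
        (fun y2 => (h2 y2).2)
      rwa [FsQ_eq_add_encCost, FsQ_eq_add_encCost, add_le_add_iff_left] at h
  refine ⟨fun y1 u1 => ?_, fun y2 u2 => ?_⟩
  · rw [psi1_eq_psiGen]
    exact congrFun (eq_gibbs_of_isMinOn_encCost p P1 P2 hs1 hp hP2 hP2sum hQX12 hQX1 hQU1 hQY01
      QX2 QU2 QY02 hP1mem (isMinOn_iff.2 fun P1' h => hcost P1' P2 h hP2mem) y1) u1
  · simp only [encCost_swap p] at hcost
    rw [psi2_eq_psiGen]
    exact congrFun (eq_gibbs_of_isMinOn_encCost _ P2 P1 hs2 (fun x y0 y2 y1 => hp x y0 y1 y2) hP1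
      hP1sum (fun u2 u1 y0 x => hQX12 u1 u2 y0 x) hQX2 hQU2 hQY02 QX1 QU1 QY01 hP2mem
      (isMinOn_iff.2 fun P2' h => hcost P1 P2' hP1mem h) y2) u2

end CEO
end
end
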